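/- arXiv:1403.5873 — 2 statements merged into one kernel-verified Lean document; each statement's English description precedes it below -/
import Mathlib

section
/- A normal category C is subtractive if and only if the Upper 3×3 Lemma holds in C: for every commutative 3×3 diagram in C whose three columns are short exact sequences and whose middle row is a short exact sequence, if the bottom row is a short exact sequence then the top row is a short exact sequence. -/
open CategoryTheory CategoryTheory.Limits

universe v u

namespace Paper

variable {𝒞 : Type u} [Category.{v} 𝒞]

/-- `f` is a regular epimorphism: it is a coequaliser of some pair of morphisms. -/
def IsRegEpi {X Y : 𝒞} (f : X ⟶ Y) : Prop :=
  ∃ (Z : 𝒞) (a b : Z ⟶ X), a ≫ f = b ≫ f ∧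
    ∀ {T : 𝒞} (h : X ⟶ T), a ≫ h = b ≫ h → ∃! u : Y ⟶ T, f ≫ u = h

/-- Regular epimorphisms are pullback-stable. -/
def RegEpisStable (𝒞 : Type u) [Category.{v} 𝒞] : Prop :=
  ∀ {P X Y Z : 𝒞} (p₁ : P ⟶ X) (p₂ : P ⟶ Y) (f : X ⟶ Z) (g : Y ⟶ Z),
    IsPullback p₁ p₂ f g → IsRegEpi g → IsRegEpi p₁

/-- Every kernel pair admits a coequaliser. -/
def KernelPairsHaveCoequalisers (𝒞 : Type u) [Category.{v} 𝒞] : Prop :=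
  ∀ {R X Y : 𝒞} (f : X ⟶ Y) (a b : R ⟶ X), IsKernelPair f a b →
    ∃ (Q : 𝒞) (q : X ⟶ Q), a ≫ q = b ≫ q ∧
      ∀ {T : 𝒞} (h : X ⟶ T), a ≫ h = b ≫ h → ∃! u : Q ⟶ T, q ≫ u = h

/-- A relation from `X` to `Y`: a jointly monomorphic span. -/
structure Rel (𝒞 : Type u) [Category.{v} 𝒞] (X Y : 𝒞) where
  R : 𝒞
  p1 : R ⟶ X
  p2 : R ⟶ Y
  jm : ∀ {Z : 𝒞} (a b : Z ⟶ R), a ≫ p1 = b ≫ p1 → a ≫ p2 = b ≫ p2 → a = b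

variable {X Y Z : 𝒞}

/-- `ρ` is a subrelation of `σ`. -/
def Rel.le (ρ σ : Rel 𝒞 X Y) : Prop :=
  ∃ j : ρ.R ⟶ σ.R, j ≫ σ.p1 = ρ.p1 ∧ j ≫ σ.p2 = ρ.p2

/-- `ρ` and `σ` are the same relation (isomorphic as subobjects of `X × Y`). -/
def Rel.equiv (ρ σ : Rel 𝒞 X Y) : Prop := ρ.le σ ∧ σ.le ρ

/-- The opposite relation. -/
def Rel.op (ρ : Rel 𝒞 X Y) : Rel 𝒞 Y X :=
  ⟨ρ.R, ρ.p2, ρ.p1, fun a b h2 h1 => ρ.jm a b h1 h2⟩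

/-- A morphism viewed as a relation. -/
def homRel (f : X ⟶ Y) : Rel 𝒞 X Y :=
  ⟨X, 𝟙 X, f, fun a b h _ => by simpa using h⟩

/-- The discrete (diagonal) relation on `X`. -/
def diagRel (X : 𝒞) : Rel 𝒞 X X := homRel (𝟙 X)

/-- The kernel pair `Eq(f)` of `f` as a relation on `X`. -/
noncomputable def kerPairRel [HasPullbacks 𝒞] (f : X ⟶ Y) : Rel 𝒞 X X :=
  ⟨pullback f f, pullback.fst f f, pullback.snd f f,
    fun a b h1 h2 => pullback.hom_ext h1 h2⟩

/-- `τ` is the composite `σρ` (first `ρ` from `X` to `Y`, then `σ` from `Y` to `Z`),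
i.e. the (regular epi, jointly mono) factorisation of the span induced on the
pullback of `ρ.p2` and `σ.p1`. -/
def IsRelComp [HasPullbacks 𝒞] (σ : Rel 𝒞 Y Z) (ρ : Rel 𝒞 X Y) (τ : Rel 𝒞 X Z) : Prop :=
  ∃ e : pullback ρ.p2 σ.p1 ⟶ τ.R, IsRegEpi e ∧
    e ≫ τ.p1 = pullback.fst ρ.p2 σ.p1 ≫ ρ.p1 ∧
    e ≫ τ.p2 = pullback.snd ρ.p2 σ.p1 ≫ σ.p2

def Rel.IsReflexive (ρ : Rel 𝒞 X X) : Prop :=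
  ∃ r : X ⟶ ρ.R, r ≫ ρ.p1 = 𝟙 X ∧ r ≫ ρ.p2 = 𝟙 X

def Rel.IsSymmetric (ρ : Rel 𝒞 X X) : Prop :=
  ∃ s : ρ.R ⟶ ρ.R, s ≫ ρ.p1 = ρ.p2 ∧ s ≫ ρ.p2 = ρ.p1

def Rel.IsTransitive [HasPullbacks 𝒞] (ρ : Rel 𝒞 X X) : Prop :=
  ∃ t : pullback ρ.p2 ρ.p1 ⟶ ρ.R,
    t ≫ ρ.p1 = pullback.fst ρ.p2 ρ.p1 ≫ ρ.p1 ∧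
    t ≫ ρ.p2 = pullback.snd ρ.p2 ρ.p1 ≫ ρ.p2

def Rel.IsEquivalence [HasPullbacks 𝒞] (ρ : Rel 𝒞 X X) : Prop :=
  ρ.IsReflexive ∧ ρ.IsSymmetric ∧ ρ.IsTransitive

/-- A finitely complete category is a Mal'tsev category when every reflexive
relation in it is an equivalence relation. -/
def IsMaltsev (𝒞 : Type u) [Category.{v} 𝒞] [HasPullbacks 𝒞] : Prop :=
  ∀ {X : 𝒞} (ρ : Rel 𝒞 X X), ρ.IsReflexive → ρ.IsEquivalence

/-- A square of type (1): split epimorphisms `f` (with section `s`) and `g`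
(with section `t`), regular epimorphisms `c` and `d`, with `f·c = d·g` and
`s·d = c·t`. -/
structure IsSquare1 {A B E D : 𝒞} (f : A ⟶ B) (s : B ⟶ A) (g : E ⟶ D) (t : D ⟶ E)
    (c : E ⟶ A) (d : D ⟶ B) : Prop where
  sec_f : s ≫ f = 𝟙 B
  sec_g : t ≫ g = 𝟙 D
  regepi_c : IsRegEpi c
  regepi_d : IsRegEpi d
  comm1 : c ≫ f = g ≫ d
  comm2 : d ≫ s = t ≫ c

/-- `N` is an ideal of morphisms. -/
def IsIdeal (N : MorphismProperty 𝒞) : Prop :=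
  ∀ {X Y Z : 𝒞} (f : X ⟶ Y) (g : Y ⟶ Z), N f ∨ N g → N (f ≫ g)

/-- `n` is an `N`-kernel of `f`. -/
def IsNKernel (N : MorphismProperty 𝒞) {X Y K : 𝒞} (f : X ⟶ Y) (n : K ⟶ X) : Prop :=
  N (n ≫ f) ∧ ∀ {Z : 𝒞} (m : Z ⟶ X), N (m ≫ f) → ∃! u : Z ⟶ K, u ≫ n = m

/-- Every morphism admits an `N`-kernel. -/
def HasNKernels (N : MorphismProperty 𝒞) : Prop :=
  ∀ {X Y : 𝒞} (f : X ⟶ Y), ∃ (K : 𝒞) (n : K ⟶ X), IsNKernel N f n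

/-- `τ` is the largest star subrelation `ρ*` of the relation `ρ`. -/
def IsLargestStarSub (N : MorphismProperty 𝒞) (ρ τ : Rel 𝒞 X Y) : Prop :=
  τ.le ρ ∧ N τ.p1 ∧ ∀ σ : Rel 𝒞 X Y, σ.le ρ → N σ.p1 → σ.le τ

/-- `(s1, s2)` is the star-kernel of `f`: the universal star coequalised by `f`. -/
def IsStarKernel (N : MorphismProperty 𝒞) {S X Y : 𝒞} (f : X ⟶ Y) (s1 s2 : S ⟶ X) : Prop :=
  N s1 ∧ s1 ≫ f = s2 ≫ f ∧
    ∀ {T : 𝒞} (t1 t2 : T ⟶ X), N t1 → t1 ≫ f = t2 ≫ f →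
      ∃! u : T ⟶ S, u ≫ s1 = t1 ∧ u ≫ s2 = t2

/-- `(ν1, ν2)` is the star of the pullback relation of `(g, δ)`: the universal
pair with `ν1 ∈ N` and `δ·ν1 = g·ν2`. -/
def IsStarPullbackRel (N : MorphismProperty 𝒞) {W E D P : 𝒞} (δ : W ⟶ D) (g : E ⟶ D)
    (ν1 : P ⟶ W) (ν2 : P ⟶ E) : Prop :=
  N ν1 ∧ ν1 ≫ δ = ν2 ≫ g ∧
    ∀ {T : 𝒞} (t1 : T ⟶ W) (t2 : T ⟶ E), N t1 → t1 ≫ δ = t2 ≫ g →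
      ∃! u : T ⟶ P, u ≫ ν1 = t1 ∧ u ≫ ν2 = t2

/-- `f` is a coequaliser of `(s1, s2)`. -/
def IsCoeqOf {S X Y : 𝒞} (f : X ⟶ Y) (s1 s2 : S ⟶ X) : Prop :=
  s1 ≫ f = s2 ≫ f ∧ ∀ {T : 𝒞} (h : X ⟶ T), s1 ≫ h = s2 ≫ h → ∃! u : Y ⟶ T, f ≫ u = h

/-- Star-regularity: every regular epimorphism is a coequaliser of a star. -/
def StarRegular (𝒞 : Type u) [Category.{v} 𝒞] (N : MorphismProperty 𝒞) : Prop :=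
  ∀ {X Y : 𝒞} (f : X ⟶ Y), IsRegEpi f →
    ∃ (S : 𝒞) (s1 s2 : S ⟶ X), N s1 ∧ IsCoeqOf f s1 s2

/-- `f` is saturating: the induced morphism between the `N`-kernels of the
identities is a regular epimorphism. -/
def Saturating (N : MorphismProperty 𝒞) {X Y : 𝒞} (f : X ⟶ Y) : Prop :=
  ∀ {KX KY : 𝒞} (nX : KX ⟶ X) (nY : KY ⟶ Y), IsNKernel N (𝟙 X) nX → IsNKernel N (𝟙 Y) nY →
    ∀ u : KX ⟶ KY, u ≫ nY = nX ≫ f → IsRegEpi u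

/-- `X` is an `N`-trivial object. -/
def NTrivial (N : MorphismProperty 𝒞) (X : 𝒞) : Prop := N (𝟙 X)

/-- The multi-pointed category has enough trivial objects: `N` is a closed ideal and
`N`-trivial objects are closed under subobjects and squares. -/
def EnoughTrivialObjects [HasBinaryProducts 𝒞] (N : MorphismProperty 𝒞) : Prop :=
  (∀ {X Y : 𝒞} (f : X ⟶ Y), N f → ∃ (T : 𝒞) (p : X ⟶ T) (q : T ⟶ Y),
      NTrivial N T ∧ p ≫ q = f) ∧
  (∀ {S X : 𝒞} (m : S ⟶ X), Mono m → NTrivial N X → NTrivial N S) ∧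
  (∀ X : 𝒞, NTrivial N X → NTrivial N (X ⨯ X))

/-- A square of type (1) is a star-regular pushout when `(c g°)* = f° d*`. -/
def IsStarRegularPushout [HasPullbacks 𝒞] (N : MorphismProperty 𝒞) {A B E D : 𝒞}
    (f : A ⟶ B) (g : E ⟶ D) (c : E ⟶ A) (d : D ⟶ B) : Prop :=
  ∀ (ρ τ μ : Rel 𝒞 D A) (ds : Rel 𝒞 D B),
    IsRelComp (homRel c) (Rel.op (homRel g)) ρ → IsLargestStarSub N ρ τ →
    IsLargestStarSub N (homRel d) ds → IsRelComp (Rel.op (homRel f)) ds μ →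
    τ.equiv μ

/-- 2-star-permutability: `Eq(f) Eq(g)* = Eq(g) Eq(f)*` for all regular
epimorphisms `f`, `g` with the same domain. -/
def TwoStarPermutable (𝒞 : Type u) [Category.{v} 𝒞] [HasPullbacks 𝒞]
    (N : MorphismProperty 𝒞) : Prop :=
  ∀ {X Y Z : 𝒞} (f : X ⟶ Y) (g : X ⟶ Z), IsRegEpi f → IsRegEpi g →
    ∀ (sf sg : Rel 𝒞 X X), IsLargestStarSub N (kerPairRel f) sf →
      IsLargestStarSub N (kerPairRel g) sg →
    ∀ (τ₁ τ₂ : Rel 𝒞 X X), IsRelComp (kerPairRel f) sg τ₁ →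
      IsRelComp (kerPairRel g) sf τ₂ → τ₁.equiv τ₂

section Pointed

variable [HasZeroMorphisms 𝒞]

/-- `k` is a kernel of `f`. -/
def IsKernelOf {K X Y : 𝒞} (k : K ⟶ X) (f : X ⟶ Y) : Prop :=
  k ≫ f = 0 ∧ ∀ {Z : 𝒞} (m : Z ⟶ X), m ≫ f = 0 → ∃! u : Z ⟶ K, u ≫ k = m

/-- `f` is a cokernel of `k`. -/
def IsCokernelOf {X Y K : 𝒞} (f : X ⟶ Y) (k : K ⟶ X) : Prop :=
  k ≫ f = 0 ∧ ∀ {T : 𝒞} (h : X ⟶ T), k ≫ h = 0 → ∃! u : Y ⟶ T, f ≫ u = h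

/-- Short exact sequence `K → X ↠ Y`. -/
def IsShortExact {K X Y : 𝒞} (k : K ⟶ X) (f : X ⟶ Y) : Prop :=
  IsKernelOf k f ∧ IsCokernelOf f k

/-- Subtractivity: every reflexive, left punctual relation is right punctual. -/
def IsSubtractive (𝒞 : Type u) [Category.{v} 𝒞] [HasZeroMorphisms 𝒞] : Prop :=
  ∀ {X : 𝒞} (ρ : Rel 𝒞 X X), ρ.IsReflexive →
    (∃ l : X ⟶ ρ.R, l ≫ ρ.p1 = 𝟙 X ∧ l ≫ ρ.p2 = 0) →
    (∃ r : X ⟶ ρ.R, r ≫ ρ.p1 = 0 ∧ r ≫ ρ.p2 = 𝟙 X)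

end Pointed

/-!
Subtractivity, stated for reflexive relations on one object, extends to generalised elements of
an arbitrary relation by taking its inverse image along `x × y`: if `(x, y)` and `(x, 0)` lie in
a relation, so does `(0, y)`.

Given the Upper 3×3 diagram, the kernel part of the top row is a diagram chase valid in any
pointed category. To see that `p₂` is a regular epimorphism, lift an element `x` of `A₃`
locally (that is, after pulling back along a regular epimorphism) to `y` in `B₂` with
`q₂ y = a₃ x`; then `b₂ y` comes from `C₁` and, locally, from some `z` in `B₁`.
In the relation from `C₂` to `A₃` given by the image of `(b₂ y, x)`, both `(b₂ y, x)` and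
`(b₂ q₁ z, 0) = (b₂ y, 0)` occur, so subtractivity gives `(0, x)`; locally this is `(b₂ y', x)`
with `b₂ y' = 0`, so `y'` comes from `A₂` and `x` lies in the image of `p₂`.

Conversely, for a reflexive left punctual relation the Upper 3×3 Lemma applies to a diagram
built from the kernels of the two projections, and yields the right punctuality witness.
-/

lemma isRegEpi_iff_isRegularEpi {X Y : 𝒞} (f : X ⟶ Y) : IsRegEpi f ↔ IsRegularEpi f := by
  constructor
  · rintro ⟨Z, a, b, w, hdesc⟩
    exact ⟨⟨⟨Z, a, b, w, Cofork.IsColimit.ofExistsUnique fun s => hdesc s.π s.condition⟩⟩⟩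
  · intro _
    exact ⟨_, _, _, IsRegularEpi.w f,
      fun h hh => Cofork.IsColimit.existsUnique (IsRegularEpi.isColimit f) h hh⟩

theorem regular_of_regEpisStable [HasFiniteLimits 𝒞] (hcoeq : KernelPairsHaveCoequalisers 𝒞)
    (hstab : RegEpisStable 𝒞) : Regular 𝒞 where
  hasCoequalizer_of_isKernelPair {_ _ _ f g₁ g₂} hkp := by
    obtain ⟨Q, q, w, hdesc⟩ := hcoeq f g₁ g₂ hkp
    exact ⟨⟨⟨_, Cofork.IsColimit.ofExistsUnique (t := Cofork.ofπ q w)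
      fun s => hdesc s.π s.condition⟩⟩⟩
  regularEpiIsStableUnderBaseChange := ⟨fun sq hg => by
    simp only [MorphismProperty.regularEpi_iff, ← isRegEpi_iff_isRegularEpi] at hg ⊢
    exact hstab _ _ _ _ sq.flip hg⟩

lemma isRegularEpi_of_comp [Regular 𝒞] {X Y Z : 𝒞} (f : X ⟶ Y) (g : Y ⟶ Z)
    [IsRegularEpi (f ≫ g)] : IsRegularEpi g :=
  have := strongEpi_of_strongEpi f g
  inferInstance

namespace Rel

def Mem {T X Y : 𝒞} (ρ : Rel 𝒞 X Y) (a : T ⟶ X) (b : T ⟶ Y) : Prop :=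
  ∃ s : T ⟶ ρ.R, s ≫ ρ.p1 = a ∧ s ≫ ρ.p2 = b

lemma Mem.precomp {S T X Y : 𝒞} {ρ : Rel 𝒞 X Y} {a : T ⟶ X} {b : T ⟶ Y} (h : ρ.Mem a b)
    (e : S ⟶ T) : ρ.Mem (e ≫ a) (e ≫ b) := by
  obtain ⟨s, hs₁, hs₂⟩ := h
  exact ⟨e ≫ s, by rw [Category.assoc, hs₁], by rw [Category.assoc, hs₂]⟩

variable [HasPullbacks 𝒞] [HasBinaryProducts 𝒞]

noncomputable def comap {X Y Z W : 𝒞} (ρ : Rel 𝒞 X Y) (f : Z ⟶ X) (g : W ⟶ Y) : Rel 𝒞 Z W where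
  R := pullback (prod.lift ρ.p1 ρ.p2) (prod.map f g)
  p1 := pullback.snd _ _ ≫ prod.fst
  p2 := pullback.snd _ _ ≫ prod.snd
  jm a b h₁ h₂ := by
    have : Mono (prod.lift ρ.p1 ρ.p2) :=
      ⟨fun a b h => ρ.jm a b (by simpa only [Category.assoc, prod.lift_fst] using h =≫ prod.fst)
        (by simpa only [Category.assoc, prod.lift_snd] using h =≫ prod.snd)⟩
    rw [← cancel_mono (pullback.snd _ _)]
    ext
    · simpa only [Category.assoc] using h₁
    · simpa only [Category.assoc] using h₂

lemma mem_comap_iff {T X Y Z W : 𝒞} (ρ : Rel 𝒞 X Y) (f : Z ⟶ X) (g : W ⟶ Y)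
    (a : T ⟶ Z) (b : T ⟶ W) : (ρ.comap f g).Mem a b ↔ ρ.Mem (a ≫ f) (b ≫ g) := by
  constructor
  · rintro ⟨s, rfl, rfl⟩
    let π : (ρ.comap f g).R ⟶ ρ.R := pullback.fst _ _
    have hw := pullback.condition (f := prod.lift ρ.p1 ρ.p2) (g := prod.map f g)
    have hπ₁ : π ≫ ρ.p1 = (ρ.comap f g).p1 ≫ f := by
      have := hw =≫ prod.fst
      simp only [Category.assoc, prod.lift_fst, prod.map_fst] at this
      exact this.trans (Category.assoc _ _ _).symm
    have hπ₂ : π ≫ ρ.p2 = (ρ.comap f g).p2 ≫ g := by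
      have := hw =≫ prod.snd
      simp only [Category.assoc, prod.lift_snd, prod.map_snd] at this
      exact this.trans (Category.assoc _ _ _).symm
    exact ⟨s ≫ π, by rw [Category.assoc, hπ₁, Category.assoc],
      by rw [Category.assoc, hπ₂, Category.assoc]⟩
  · rintro ⟨s, hs₁, hs₂⟩
    refine ⟨pullback.lift s (prod.lift a b) ?_, ?_, ?_⟩
    · ext <;> simp only [Category.assoc, prod.lift_fst, prod.lift_snd, prod.lift_map, hs₁, hs₂]
    · simp only [comap, pullback.lift_snd_assoc, prod.lift_fst]
    · simp only [comap, pullback.lift_snd_assoc, prod.lift_snd]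

end Rel

lemma IsSubtractive.mem_zero_left [HasZeroMorphisms 𝒞] [HasPullbacks 𝒞] [HasBinaryProducts 𝒞]
    (hsub : IsSubtractive 𝒞) {T X Y : 𝒞} {ρ : Rel 𝒞 X Y} {x : T ⟶ X} {y : T ⟶ Y}
    (hxy : ρ.Mem x y) (hx0 : ρ.Mem x 0) : ρ.Mem 0 y := by
  have key := hsub (ρ.comap x y) ((ρ.mem_comap_iff x y _ _).2 (by simpa only [Category.id_comp]
    using hxy)) ((ρ.mem_comap_iff x y _ _).2 (by simpa only [Category.id_comp, zero_comp] using hx0))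
  simpa only [Category.id_comp, zero_comp] using (ρ.mem_comap_iff x y 0 (𝟙 T)).1 key

noncomputable def imageRel [HasBinaryProducts 𝒞] [HasImages 𝒞] {P X Y : 𝒞} (u : P ⟶ X)
    (v : P ⟶ Y) : Rel 𝒞 X Y where
  R := image (prod.lift u v)
  p1 := image.ι _ ≫ prod.fst
  p2 := image.ι _ ≫ prod.snd
  jm a b h₁ h₂ := by
    rw [← cancel_mono (image.ι (prod.lift u v))]
    ext
    · simpa only [Category.assoc] using h₁
    · simpa only [Category.assoc] using h₂

section Regular

variable [Regular 𝒞]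

lemma mem_imageRel {P X Y : 𝒞} (u : P ⟶ X) (v : P ⟶ Y) : (imageRel u v).Mem u v :=
  ⟨factorThruImage _, by simp only [imageRel, image.fac_assoc, prod.lift_fst],
    by simp only [imageRel, image.fac_assoc, prod.lift_snd]⟩

lemma Rel.Mem.exists_cover_of_imageRel {P T X Y : 𝒞} {u : P ⟶ X} {v : P ⟶ Y} {a : T ⟶ X}
    {b : T ⟶ Y} (h : (imageRel u v).Mem a b) :
    ∃ (E : 𝒞) (e : E ⟶ T) (w : E ⟶ P), IsRegularEpi e ∧ e ≫ a = w ≫ u ∧ e ≫ b = w ≫ v := by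
  obtain ⟨s, hs₁, hs₂⟩ := h
  let s' : T ⟶ image (prod.lift u v) := s
  have hs : s' ≫ image.ι _ = prod.lift a b := by
    ext
    · rw [Category.assoc, prod.lift_fst]
      exact hs₁
    · rw [Category.assoc, prod.lift_snd]
      exact hs₂
  have hw : pullback.fst s' (factorThruImage _) ≫ prod.lift a b
      = pullback.snd s' (factorThruImage _) ≫ prod.lift u v := by
    rw [← hs, ← Category.assoc, pullback.condition, Category.assoc, image.fac]
  refine ⟨_, pullback.fst s' (factorThruImage _), pullback.snd _ _, inferInstance, ?_, ?_⟩
  · simpa only [Category.assoc, prod.lift_fst] using hw =≫ prod.fst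
  · simpa only [Category.assoc, prod.lift_snd] using hw =≫ prod.snd

end Regular

def RegularEpisAreCokernels (𝒞 : Type u) [Category.{v} 𝒞] [HasZeroMorphisms 𝒞] : Prop :=
  ∀ {X Y : 𝒞} (f : X ⟶ Y), IsRegEpi f → ∃ (K : 𝒞) (k : K ⟶ X), IsCokernelOf f k

section Pointed

variable [HasZeroMorphisms 𝒞]

lemma IsKernelOf.mono {K X Y : 𝒞} {k : K ⟶ X} {f : X ⟶ Y} (h : IsKernelOf k f) : Mono k where
  right_cancellation u v huv := by
    obtain ⟨w, -, hw⟩ := h.2 (u ≫ k) (by rw [Category.assoc, h.1, comp_zero])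
    exact (hw u rfl).trans (hw v huv.symm).symm

lemma IsKernelOf.of_mono {K X Y : 𝒞} {k : K ⟶ X} {f : X ⟶ Y} [Mono k] (hk : k ≫ f = 0)
    (hlift : ∀ {Z : 𝒞} (m : Z ⟶ X), m ≫ f = 0 → ∃ u : Z ⟶ K, u ≫ k = m) : IsKernelOf k f :=
  ⟨hk, fun m hm => (hlift m hm).elim fun u hu =>
    ⟨u, hu, fun _ hu' => (cancel_mono k).1 (hu'.trans hu.symm)⟩⟩

lemma isKernelOf_kernel_ι [HasKernels 𝒞] {X Y : 𝒞} (f : X ⟶ Y) : IsKernelOf (kernel.ι f) f :=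
  .of_mono (kernel.condition f) fun m hm => ⟨kernel.lift f m hm, kernel.lift_ι f m hm⟩

lemma IsCokernelOf.isRegularEpi {X Y K : 𝒞} {f : X ⟶ Y} {k : K ⟶ X} (h : IsCokernelOf f k) :
    IsRegularEpi f :=
  (isRegEpi_iff_isRegularEpi f).1
    ⟨K, k, 0, by rw [h.1, zero_comp], fun h' hh' => h.2 h' (by rw [hh', zero_comp])⟩

lemma IsCokernelOf.of_isKernelOf (hnormal : RegularEpisAreCokernels 𝒞) {K X Y : 𝒞} {f : X ⟶ Y}
    {k : K ⟶ X} [IsRegularEpi f] (hker : IsKernelOf k f) : IsCokernelOf f k := by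
  obtain ⟨K', k', hk'⟩ := hnormal f ((isRegEpi_iff_isRegularEpi f).2 inferInstance)
  obtain ⟨v, hv, -⟩ := hker.2 k' hk'.1
  refine ⟨hker.1, fun h hh => ?_⟩
  obtain ⟨u, hu, -⟩ := hk'.2 h (by rw [← hv, Category.assoc, hh, comp_zero])
  exact ⟨u, hu, fun u' hu' => (cancel_epi f).1 (hu'.trans hu.symm)⟩

lemma IsShortExact.of_isKernelOf (hnormal : RegularEpisAreCokernels 𝒞) {K X Y : 𝒞} {k : K ⟶ X}
    {f : X ⟶ Y} [IsRegularEpi f] (hker : IsKernelOf k f) : IsShortExact k f :=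
  ⟨hker, .of_isKernelOf hnormal hker⟩

lemma isShortExact_id_zero {X Z : 𝒞} (hZ : IsZero Z) : IsShortExact (𝟙 X) (0 : X ⟶ Z) :=
  ⟨.of_mono comp_zero fun m _ => ⟨m, Category.comp_id m⟩,
    comp_zero, fun h hh => ⟨0, by simp only [comp_zero, ← hh, Category.id_comp],
      fun _ _ => hZ.eq_of_src _ _⟩⟩

lemma IsCokernelOf.exists_section_of_eq_zero {X Y K : 𝒞} {f : X ⟶ Y} {k : K ⟶ X}
    (h : IsCokernelOf f k) (hk : k = 0) : ∃ u : Y ⟶ X, u ≫ f = 𝟙 Y := by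
  have := h.isRegularEpi
  obtain ⟨u, hu, -⟩ := h.2 (𝟙 X) (by rw [hk, zero_comp])
  exact ⟨u, (cancel_epi f).1 (by rw [reassoc_of% hu, Category.comp_id])⟩

end Pointed

def UpperThreeByThree (𝒞 : Type u) [Category.{v} 𝒞] [HasZeroMorphisms 𝒞] : Prop :=
  ∀ {A₁ A₂ A₃ B₁ B₂ B₃ C₁ C₂ C₃ : 𝒞}
    (a₁ : A₁ ⟶ B₁) (a₂ : A₂ ⟶ B₂) (a₃ : A₃ ⟶ B₃)
    (b₁ : B₁ ⟶ C₁) (b₂ : B₂ ⟶ C₂) (b₃ : B₃ ⟶ C₃)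
    (p₁ : A₁ ⟶ A₂) (p₂ : A₂ ⟶ A₃)
    (q₁ : B₁ ⟶ B₂) (q₂ : B₂ ⟶ B₃)
    (r₁ : C₁ ⟶ C₂) (r₂ : C₂ ⟶ C₃),
    p₁ ≫ a₂ = a₁ ≫ q₁ → p₂ ≫ a₃ = a₂ ≫ q₂ →
    q₁ ≫ b₂ = b₁ ≫ r₁ → q₂ ≫ b₃ = b₂ ≫ r₂ →
    IsShortExact a₁ b₁ → IsShortExact a₂ b₂ → IsShortExact a₃ b₃ →
    IsShortExact q₁ q₂ →
    IsShortExact r₁ r₂ → IsShortExact p₁ p₂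

section ThreeByThree

variable [HasZeroMorphisms 𝒞] {A₁ A₂ A₃ B₁ B₂ B₃ C₁ C₂ C₃ : 𝒞}
  {a₁ : A₁ ⟶ B₁} {a₂ : A₂ ⟶ B₂} {a₃ : A₃ ⟶ B₃} {b₁ : B₁ ⟶ C₁} {b₂ : B₂ ⟶ C₂} {b₃ : B₃ ⟶ C₃}
  {p₁ : A₁ ⟶ A₂} {p₂ : A₂ ⟶ A₃} {q₁ : B₁ ⟶ B₂} {q₂ : B₂ ⟶ B₃} {r₁ : C₁ ⟶ C₂} {r₂ : C₂ ⟶ C₃}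

lemma isKernelOf_of_threeByThree (hsq₁ : p₁ ≫ a₂ = a₁ ≫ q₁) (hsq₂ : p₂ ≫ a₃ = a₂ ≫ q₂)
    (hsq₃ : q₁ ≫ b₂ = b₁ ≫ r₁) (hc₁ : IsKernelOf a₁ b₁) (hc₂ : IsKernelOf a₂ b₂)
    (hc₃ : IsKernelOf a₃ b₃) (hmid : IsKernelOf q₁ q₂) (hbot : IsKernelOf r₁ r₂) :
    IsKernelOf p₁ p₂ := by
  have := hc₁.mono
  have := hc₂.mono
  have := hc₃.mono
  have := hmid.mono
  have := hbot.mono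
  have : Mono p₁ := mono_of_mono_fac hsq₁
  refine .of_mono ((cancel_mono a₃).1 ?_) fun m hm => ?_
  · rw [Category.assoc, hsq₂, reassoc_of% hsq₁, hmid.1, comp_zero, zero_comp]
  obtain ⟨w, hw, -⟩ := hmid.2 (m ≫ a₂) (by rw [Category.assoc, ← hsq₂, reassoc_of% hm, zero_comp])
  obtain ⟨u, hu, -⟩ := hc₁.2 w <| (cancel_mono r₁).1 <| by
    rw [Category.assoc, ← hsq₃, reassoc_of% hw, hc₂.1, comp_zero, zero_comp]
  exact ⟨u, (cancel_mono a₂).1 (by rw [Category.assoc, hsq₁, reassoc_of% hu, hw])⟩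

lemma isRegularEpi_of_threeByThree [Regular 𝒞] (hsub : IsSubtractive 𝒞)
    (hsq₂ : p₂ ≫ a₃ = a₂ ≫ q₂) (hsq₃ : q₁ ≫ b₂ = b₁ ≫ r₁) (hsq₄ : q₂ ≫ b₃ = b₂ ≫ r₂)
    (hc₁ : IsCokernelOf b₁ a₁) (hc₂ : IsKernelOf a₂ b₂) (hc₃ : IsKernelOf a₃ b₃)
    (hmid : IsShortExact q₁ q₂) (hbot : IsKernelOf r₁ r₂) : IsRegularEpi p₂ := by
  have := hc₁.isRegularEpi
  have := hmid.2.isRegularEpi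
  have := hc₃.mono
  let π := pullback.fst a₃ q₂
  let y := pullback.snd a₃ q₂
  obtain ⟨γ, hγ, -⟩ := hbot.2 (y ≫ b₂) <| by
    rw [Category.assoc, ← hsq₄, ← pullback.condition_assoc, hc₃.1, comp_zero]
  let e₁ := pullback.fst γ b₁
  let z := pullback.snd γ b₁
  have hz : z ≫ q₁ ≫ b₂ = e₁ ≫ y ≫ b₂ := by
    rw [hsq₃, ← hγ, pullback.condition_assoc]
  have hmem₁ := (mem_imageRel (y ≫ b₂) π).precomp e₁
  have hmem₀ : (imageRel (y ≫ b₂) π).Mem (e₁ ≫ y ≫ b₂) 0 := by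
    let x₀ : pullback γ b₁ ⟶ pullback a₃ q₂ := pullback.lift 0 (z ≫ q₁) <| by
      rw [zero_comp, Category.assoc, hmid.1.1, comp_zero]
    rw [← hz]
    simpa only [x₀, y, π, pullback.lift_snd_assoc, pullback.lift_fst, Category.assoc]
      using (mem_imageRel (y ≫ b₂) π).precomp x₀
  obtain ⟨E₂, e₂, w, _, hw₁, hw₂⟩ := (hsub.mem_zero_left hmem₁ hmem₀).exists_cover_of_imageRel
  obtain ⟨ψ, hψ, -⟩ := hc₂.2 (w ≫ y) (by rw [Category.assoc, ← hw₁, comp_zero])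
  have hψp₂ : ψ ≫ p₂ = e₂ ≫ e₁ ≫ π := by
    rw [← cancel_mono a₃, hw₂, Category.assoc, hsq₂, reassoc_of% hψ, Category.assoc]
    exact w ≫= pullback.condition.symm
  have : IsRegularEpi (ψ ≫ p₂) := hψp₂ ▸ inferInstance
  exact isRegularEpi_of_comp ψ p₂

end ThreeByThree

lemma upperThreeByThree_of_isSubtractive [HasZeroMorphisms 𝒞] [Regular 𝒞]
    (hnormal : RegularEpisAreCokernels 𝒞) (hsub : IsSubtractive 𝒞) : UpperThreeByThree 𝒞 := by
  intro _ _ _ _ _ _ _ _ _ a₁ a₂ a₃ b₁ b₂ b₃ p₁ p₂ q₁ q₂ r₁ r₂ hsq₁ hsq₂ hsq₃ hsq₄ hc₁ hc₂ hc₃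
    hmid hbot
  have := isRegularEpi_of_threeByThree hsub hsq₂ hsq₃ hsq₄ hc₁.2 hc₂.1 hc₃.1 hmid hbot.1
  exact .of_isKernelOf hnormal
    (isKernelOf_of_threeByThree hsq₁ hsq₂ hsq₃ hc₁.1 hc₂.1 hc₃.1 hmid.1 hbot.1)

lemma isShortExact_kernel_ι_of_isSplitEpi [HasZeroMorphisms 𝒞] [HasKernels 𝒞]
    (hnormal : RegularEpisAreCokernels 𝒞) {X Y : 𝒞} (f : X ⟶ Y) [IsSplitEpi f] :
    IsShortExact (kernel.ι f) f :=
  .of_isKernelOf hnormal (isKernelOf_kernel_ι f)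

open ZeroObject in
/-- For a reflexive, left punctual relation `ρ` on `X`, the Upper 3×3 Lemma applies to
```
  K ───0───→ Ker p₁ ──p₂──→ X
  ↓            ↓            ‖
Ker p₂ ──────→ R ───p₂───→ X
  ↓p₁          ↓p₁          ↓
  X ══════════ X ─────────→ 0
```
whose top left square commutes because `K ⟶ Ker p₂ ⟶ R` is killed by both projections of the
jointly monic `ρ`. So `p₂ : Ker p₁ ⟶ X`, a cokernel of `0`, is invertible. -/
lemma isSubtractive_of_upperThreeByThree [HasZeroMorphisms 𝒞] [HasZeroObject 𝒞]
    [HasFiniteLimits 𝒞] (hnormal : RegularEpisAreCokernels 𝒞) (h33 : UpperThreeByThree 𝒞) :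
    IsSubtractive 𝒞 := by
  intro X ρ ⟨r, _, hr₂⟩ ⟨l, hl₁, hl₂⟩
  have : IsSplitEpi ρ.p1 := ⟨⟨l, hl₁⟩⟩
  have : IsSplitEpi ρ.p2 := ⟨⟨r, hr₂⟩⟩
  have : IsSplitEpi (kernel.ι ρ.p2 ≫ ρ.p1) := ⟨⟨kernel.lift ρ.p2 l hl₂, by rw [kernel.lift_ι_assoc, hl₁]⟩⟩
  let k := kernel.ι (kernel.ι ρ.p2 ≫ ρ.p1)
  have hk : k ≫ kernel.ι ρ.p2 = 0 := ρ.jm _ _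
    (by rw [Category.assoc, kernel.condition, zero_comp])
    (by rw [Category.assoc, kernel.condition, comp_zero, zero_comp])
  have hZ := isZero_zero 𝒞
  obtain ⟨-, htop⟩ := h33 k (kernel.ι ρ.p1) (𝟙 X) (kernel.ι ρ.p2 ≫ ρ.p1) ρ.p1 (0 : X ⟶ 0)
    0 (kernel.ι ρ.p1 ≫ ρ.p2) (kernel.ι ρ.p2) ρ.p2 (𝟙 X) (0 : X ⟶ 0)
    (by rw [zero_comp, hk]) (Category.comp_id _) (Category.comp_id _).symm
    (by rw [comp_zero, comp_zero])
    (isShortExact_kernel_ι_of_isSplitEpi hnormal _) (isShortExact_kernel_ι_of_isSplitEpi hnormal _)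
    (isShortExact_id_zero hZ) (isShortExact_kernel_ι_of_isSplitEpi hnormal _)
    (isShortExact_id_zero hZ)
  obtain ⟨u, hu⟩ := htop.exists_section_of_eq_zero rfl
  exact ⟨u ≫ kernel.ι ρ.p1, by rw [Category.assoc, kernel.condition, comp_zero],
    by rw [Category.assoc, hu]⟩

/-- A normal category (a pointed regular category in which
every regular epimorphism is a normal epimorphism) is subtractive iff the Upper
3×3 Lemma holds in it. -/
theorem statement14 [HasZeroObject 𝒞] [HasZeroMorphisms 𝒞] [HasFiniteLimits 𝒞]
    (hcoeq : KernelPairsHaveCoequalisers 𝒞) (hstab : RegEpisStable 𝒞)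
    (hnormal : ∀ {X Y : 𝒞} (f : X ⟶ Y), IsRegEpi f →
      ∃ (K : 𝒞) (k : K ⟶ X), IsCokernelOf f k) :
    IsSubtractive 𝒞 ↔
      ∀ {A₁ A₂ A₃ B₁ B₂ B₃ C₁ C₂ C₃ : 𝒞}
        (a₁ : A₁ ⟶ B₁) (a₂ : A₂ ⟶ B₂) (a₃ : A₃ ⟶ B₃)
        (b₁ : B₁ ⟶ C₁) (b₂ : B₂ ⟶ C₂) (b₃ : B₃ ⟶ C₃)
        (p₁ : A₁ ⟶ A₂) (p₂ : A₂ ⟶ A₃)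
        (q₁ : B₁ ⟶ B₂) (q₂ : B₂ ⟶ B₃)
        (r₁ : C₁ ⟶ C₂) (r₂ : C₂ ⟶ C₃),
        -- the four squares commute
        p₁ ≫ a₂ = a₁ ≫ q₁ → p₂ ≫ a₃ = a₂ ≫ q₂ →
        q₁ ≫ b₂ = b₁ ≫ r₁ → q₂ ≫ b₃ = b₂ ≫ r₂ →
        -- the three columns are short exact sequences
        IsShortExact a₁ b₁ → IsShortExact a₂ b₂ → IsShortExact a₃ b₃ →
        -- the middle row is a short exact sequence
        IsShortExact q₁ q₂ →
        -- if the bottom row is short exact then so is the top row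
        IsShortExact r₁ r₂ → IsShortExact p₁ p₂ := by
  have := regular_of_regEpisStable hcoeq hstab
  exact ⟨upperThreeByThree_of_isSubtractive hnormal,
    isSubtractive_of_upperThreeByThree hnormal⟩

end Paper
end

section
/- In a multi-pointed category with kernels, for any relation ρ = (ρ1, ρ2): R ⇉ X, the pair (ρ1·n_{ρ1}, ρ2·n_{ρ1}), where n_{ρ1} is the N-kernel of ρ1, is the largest subrelation of ρ which is a star; moreover ρ* = ρΔ_X* as composites of relations, where Δ_X* = (n_{1_X}, n_{1_X}) for the N-kernel n_{1_X} of 1_X. -/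
open CategoryTheory CategoryTheory.Limits

universe v u

namespace Paper

variable {𝒞 : Type u} [Category.{v} 𝒞]

variable {X Y Z : 𝒞}

/-- The candidate star `(ρ1·n, ρ2·n)` obtained from an `N`-kernel `n` of `ρ1`. -/
def nkerRel (N : MorphismProperty 𝒞) (hN : IsIdeal N) {X Y : 𝒞} (ρ : Rel 𝒞 X Y)
    {K : 𝒞} (n : K ⟶ ρ.R) (hn : IsNKernel N ρ.p1 n) : Rel 𝒞 X Y :=
  ⟨K, n ≫ ρ.p1, n ≫ ρ.p2, fun a b h1 h2 => by
    have hab : a ≫ n = b ≫ n :=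
      ρ.jm (a ≫ n) (b ≫ n) (by simpa using h1) (by simpa using h2)
    obtain ⟨u, -, huniq⟩ := hn.2 (a ≫ n)
      (by rw [Category.assoc]; exact hN a (n ≫ ρ.p1) (Or.inr hn.1))
    rw [huniq a rfl, huniq b hab.symm]⟩

/-! A subrelation `σ ≤ ρ` given by `j : σ.R ⟶ ρ.R` is a star exactly when `j ≫ ρ1 ∈ N`, i.e. when
`j` factors through the `N`-kernel `n` of `ρ1`: this makes `(ρ1·n, ρ2·n)` the largest star in `ρ`.
The composite `ρΔ_X*` is the image of a span on the pullback `P` of `Δ_X*` and `ρ1`. The projection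
`P ⟶ R` followed by `ρ1` factors through `Δ_X* ∈ N`, hence the projection factors through `n`, and
the regular epimorphism `P ↠ ρΔ_X*` lifts against the jointly monic `(ρ1·n, ρ2·n)`. Conversely
`ρ1·n ∈ N` factors through `Δ_X*`, the largest star below the diagonal, which maps `ρ*` into `P`. -/

theorem IsRegEpi.epi {P T : 𝒞} {e : P ⟶ T} (he : IsRegEpi e) : Epi e := by
  obtain ⟨Z, a, b, hab, huniq⟩ := he
  refine ⟨fun {W} x y hxy => ?_⟩
  obtain ⟨u, -, hu⟩ := huniq (e ≫ x) (by rw [← Category.assoc, hab, Category.assoc])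
  exact (hu x rfl).trans (hu y hxy.symm).symm

/-- Regular epimorphisms are left orthogonal to jointly monic spans. -/
theorem Rel.le_of_isRegEpi {P : 𝒞} (τ σ : Rel 𝒞 X Y) {e : P ⟶ τ.R} (he : IsRegEpi e)
    (u : P ⟶ σ.R) (h₁ : u ≫ σ.p1 = e ≫ τ.p1) (h₂ : u ≫ σ.p2 = e ≫ τ.p2) : τ.le σ := by
  have : Epi e := he.epi
  obtain ⟨Z, a, b, hab, huniq⟩ := he
  have hu : a ≫ u = b ≫ u := σ.jm _ _
    (by simp only [Category.assoc, h₁, reassoc_of% hab])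
    (by simp only [Category.assoc, h₂, reassoc_of% hab])
  obtain ⟨j, hj, -⟩ := huniq u hu
  exact ⟨j, by rw [← cancel_epi e, reassoc_of% hj, h₁], by rw [← cancel_epi e, reassoc_of% hj, h₂]⟩

theorem Rel.p1_eq_p2_of_le_diagRel {σ : Rel 𝒞 X X} (hσ : σ.le (diagRel X)) : σ.p1 = σ.p2 := by
  obtain ⟨j, hj₁, hj₂⟩ := hσ
  exact hj₁.symm.trans hj₂

theorem exists_lift_nkerRel (N : MorphismProperty 𝒞) (hN : IsIdeal N) (ρ : Rel 𝒞 X Y)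
    {K : 𝒞} (n : K ⟶ ρ.R) (hn : IsNKernel N ρ.p1 n) {Z : 𝒞} (m : Z ⟶ ρ.R) (hm : N (m ≫ ρ.p1)) :
    ∃ u : Z ⟶ (nkerRel N hN ρ n hn).R,
      u ≫ (nkerRel N hN ρ n hn).p1 = m ≫ ρ.p1 ∧ u ≫ (nkerRel N hN ρ n hn).p2 = m ≫ ρ.p2 := by
  obtain ⟨u, hu, -⟩ := hn.2 m hm
  exact ⟨u, (reassoc_of% hu) ρ.p1, (reassoc_of% hu) ρ.p2⟩

theorem nkerRel_isLargestStarSub (N : MorphismProperty 𝒞) (hN : IsIdeal N) (ρ : Rel 𝒞 X Y)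
    {K : 𝒞} (n : K ⟶ ρ.R) (hn : IsNKernel N ρ.p1 n) :
    IsLargestStarSub N ρ (nkerRel N hN ρ n hn) := by
  refine ⟨⟨n, rfl, rfl⟩, hn.1, fun σ ⟨j, hj₁, hj₂⟩ hσ => ?_⟩
  obtain ⟨u, hu₁, hu₂⟩ := exists_lift_nkerRel N hN ρ n hn j (by rwa [hj₁])
  exact ⟨u, by rw [hu₁, hj₁], by rw [hu₂, hj₂]⟩

theorem IsLargestStarSub.exists_lift (N : MorphismProperty 𝒞) (hN : IsIdeal N)
    (hker : HasNKernels N) {ρ τ : Rel 𝒞 X Y} (hτ : IsLargestStarSub N ρ τ) {Z : 𝒞}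
    (m : Z ⟶ ρ.R) (hm : N (m ≫ ρ.p1)) :
    ∃ w : Z ⟶ τ.R, w ≫ τ.p1 = m ≫ ρ.p1 ∧ w ≫ τ.p2 = m ≫ ρ.p2 := by
  obtain ⟨K, n, hn⟩ := hker ρ.p1
  obtain ⟨u, hu₁, hu₂⟩ := exists_lift_nkerRel N hN ρ n hn m hm
  have hσ := nkerRel_isLargestStarSub N hN ρ n hn
  obtain ⟨j, hj₁, hj₂⟩ := hτ.2.2 _ hσ.1 hσ.2.1
  exact ⟨u ≫ j, by rw [Category.assoc, hj₁, hu₁], by rw [Category.assoc, hj₂, hu₂]⟩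

theorem le_nkerRel_of_isRelComp [HasPullbacks 𝒞] (N : MorphismProperty 𝒞) (hN : IsIdeal N)
    {ρ : Rel 𝒞 X Y} {K : 𝒞} {n : K ⟶ ρ.R} (hn : IsNKernel N ρ.p1 n)
    {δ : Rel 𝒞 X X} {τ : Rel 𝒞 X Y} (hδ : δ.le (diagRel X)) (hδN : N δ.p1) (hτ : IsRelComp ρ δ τ) :
    τ.le (nkerRel N hN ρ n hn) := by
  obtain ⟨e, he, he₁, he₂⟩ := hτ
  have hδ₁₂ := Rel.p1_eq_p2_of_le_diagRel hδ
  obtain ⟨u, hu, -⟩ := hn.2 (pullback.snd δ.p2 ρ.p1)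
    (by rw [← pullback.condition]; exact hN _ _ (Or.inr (hδ₁₂ ▸ hδN)))
  refine Rel.le_of_isRegEpi τ _ he u ?_ ?_
  · simp [nkerRel, reassoc_of% hu, he₁, hδ₁₂, pullback.condition]
  · simp [nkerRel, reassoc_of% hu, he₂]

theorem nkerRel_le_of_isRelComp [HasPullbacks 𝒞] (N : MorphismProperty 𝒞) (hN : IsIdeal N)
    (hker : HasNKernels N) {ρ : Rel 𝒞 X Y} {K : 𝒞} {n : K ⟶ ρ.R} (hn : IsNKernel N ρ.p1 n)
    {δ : Rel 𝒞 X X} {τ : Rel 𝒞 X Y}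
    (hδ : IsLargestStarSub N (diagRel X) δ) (hτ : IsRelComp ρ δ τ) :
    (nkerRel N hN ρ n hn).le τ := by
  obtain ⟨e, -, he₁, he₂⟩ := hτ
  obtain ⟨w, -, hw₂⟩ :=
    hδ.exists_lift N hN hker (n ≫ ρ.p1) (by simpa [diagRel, homRel] using hn.1)
  have hw : w ≫ δ.p2 = n ≫ ρ.p1 := by simpa [diagRel, homRel] using hw₂
  refine ⟨pullback.lift w n hw ≫ e, ?_, ?_⟩
  · show (pullback.lift w n hw ≫ e) ≫ τ.p1 = n ≫ ρ.p1
    rw [Category.assoc, he₁, Rel.p1_eq_p2_of_le_diagRel hδ.1, ← Category.assoc,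
      pullback.lift_fst, hw]
  · show (pullback.lift w n hw ≫ e) ≫ τ.p2 = n ≫ ρ.p2
    rw [Category.assoc, he₂, ← Category.assoc, pullback.lift_snd]

/-- In a multi-pointed category with kernels, for any relation
`ρ = (ρ1, ρ2) : R ⇉ X`, the pair `(ρ1·n, ρ2·n)`, with `n` the `N`-kernel of `ρ1`,
is the largest star subrelation of `ρ`; moreover `ρ* = ρ Δ_X*` as composites of
relations. -/
theorem statement19 [HasFiniteLimits 𝒞]
    (N : MorphismProperty 𝒞) (hN : IsIdeal N) (hker : HasNKernels N)
    {X : 𝒞} (ρ : Rel 𝒞 X X) {K : 𝒞} (n : K ⟶ ρ.R) (hn : IsNKernel N ρ.p1 n) :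
    IsLargestStarSub N ρ (nkerRel N hN ρ n hn) ∧
    (∀ (dX : Rel 𝒞 X X) (τ : Rel 𝒞 X X),
      IsLargestStarSub N (diagRel X) dX → IsRelComp ρ dX τ →
      τ.equiv (nkerRel N hN ρ n hn)) :=
  ⟨nkerRel_isLargestStarSub N hN ρ n hn, fun _ _ hdX hτ =>
    ⟨le_nkerRel_of_isRelComp N hN hn hdX.1 hdX.2.1 hτ,
      nkerRel_le_of_isRelComp N hN hker hn hdX hτ⟩⟩

end Paper
end
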